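/- arXiv:2311.07907 — 3 statements merged into one kernel-verified Lean document; each statement's English description precedes it below -/
import Mathlib

section
/- Let C be a nonempty finite family of n subsets of the plane (n ≥ 1) and let q ∈ ℝ² be a point not lying in the closure of the convex hull of the union ⋃C. Then min(stab_C(q,θ), stab_C(q,θ+π)) = 0 for every angle θ, and consequently the normalized point depth satisfies D(q,C) = 0. -/
open Real MeasureTheory

noncomputable section

abbrev Plane := EuclideanSpace ℝ (Fin 2)

/-- The ray rooted at `q` with angle `θ`. -/
def ray (q : Plane) (θ : ℝ) : Set Plane :=
  {p | ∃ t : ℝ, 0 ≤ t ∧ p = q + t • (WithLp.equiv 2 (Fin 2 → ℝ)).symm ![Real.cos θ, Real.sin θ]}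

open scoped Classical in
/-- The stabbing number: the number of members of `C` intersected by `ray q θ`. -/
def stab (C : Finset (Set Plane)) (q : Plane) (θ : ℝ) : ℕ :=
  (C.filter fun A => (ray q θ ∩ A).Nonempty).card

/-- The normalized point depth of `q` relative to `C`. -/
def pointDepth (C : Finset (Set Plane)) (q : Plane) : ℝ :=
  (1 / (C.card * π)) * ∫ θ in (0:ℝ)..π, (min (stab C q θ) (stab C q (θ + π)) : ℝ)

theorem stmt2 (n : ℕ) (hn : 1 ≤ n) (C : Finset (Set Plane)) (hC : C.card = n)
    (q : Plane) (hq : q ∉ closure (convexHull ℝ (⋃ A ∈ C, A))) :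
    (∀ θ : ℝ, min (stab C q θ) (stab C q (θ + π)) = 0) ∧ pointDepth C q = 0 := by
  classical
  set S := ⋃ A ∈ C, A with hS
  have hK : Convex ℝ (closure (convexHull ℝ S)) := (convex_convexHull ℝ S).closure
  obtain ⟨f, u, hfq, hfK⟩ := geometric_hahn_banach_point_closed hK isClosed_closure hq
  have key : ∀ θ : ℝ,
      f ((WithLp.equiv 2 (Fin 2 → ℝ)).symm ![Real.cos θ, Real.sin θ]) ≤ 0 →
      stab C q θ = 0 := by
    intro θ hv
    set v := (WithLp.equiv 2 (Fin 2 → ℝ)).symm ![Real.cos θ, Real.sin θ] with hvdef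
    rw [stab, Finset.card_eq_zero, Finset.filter_eq_empty_iff]
    intro A hA hne
    obtain ⟨p, ⟨t, ht, rfl⟩, hpA⟩ := hne
    have hpK : q + t • v ∈ closure (convexHull ℝ S) :=
      subset_closure (subset_convexHull ℝ S (Set.mem_iUnion₂.mpr ⟨A, hA, hpA⟩))
    have h1 := hfK _ hpK
    have h2 : f (q + t • v) = f q + t * f v := by
      simp [map_add, _root_.map_smul]
    nlinarith [mul_nonpos_of_nonneg_of_nonpos ht hv]
  have hneg : ∀ θ : ℝ,
      ((WithLp.equiv 2 (Fin 2 → ℝ)).symm ![Real.cos (θ + π), Real.sin (θ + π)] : Plane)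
        = -((WithLp.equiv 2 (Fin 2 → ℝ)).symm ![Real.cos θ, Real.sin θ]) := by
    intro θ
    ext i
    fin_cases i <;> simp [Real.cos_add_pi, Real.sin_add_pi]
  have main : ∀ θ : ℝ, min (stab C q θ) (stab C q (θ + π)) = 0 := by
    intro θ
    rcases le_total (f ((WithLp.equiv 2 (Fin 2 → ℝ)).symm ![Real.cos θ, Real.sin θ])) 0 with h | h
    · simp [key θ h]
    · have h' : f ((WithLp.equiv 2 (Fin 2 → ℝ)).symm ![Real.cos (θ + π), Real.sin (θ + π)]) ≤ 0 := by
        rw [hneg θ, map_neg]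
        linarith
      simp [key (θ + π) h']
  refine ⟨main, ?_⟩
  unfold pointDepth
  have hzero : ∀ θ : ℝ, (min (stab C q θ) (stab C q (θ + π)) : ℝ) = 0 := by
    intro θ
    have := main θ
    push_cast [← Nat.cast_min]
    exact_mod_cast congrArg (Nat.cast : ℕ → ℝ) this
  rw [intervalIntegral.integral_congr (g := fun _ => (0:ℝ)) (fun θ _ => hzero θ)]
  simp
end
end

section
/- Let C be a nonempty finite family of n subsets of the plane (n ≥ 1) whose union ⋃C is a bounded set. Then there exists R > 0 such that D(q,C) = 0 for every point q ∈ ℝ² with ‖q‖ > R; in particular, for every sequence of points (q_k) with ‖q_k‖ → ∞, the depths D(q_k, C) tend to 0 (curve stabbing depth vanishes at infinity). -/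
open Real MeasureTheory Filter

noncomputable section

/-! If both rays `ray q θ` and `ray q (θ + π)` meet `⋃ C`, then `q` lies on a segment joining two
points of `⋃ C`, hence in any ball containing `⋃ C`. So far from a bounded family one of the two
opposite stabbing numbers vanishes for every `θ`, and the integrand of the depth is identically
zero. -/

lemma mem_segment_add_smul_sub_smul {E : Type*} [AddCommGroup E] [Module ℝ E]
    (q v : E) {t s : ℝ} (ht : 0 ≤ t) (hs : 0 ≤ s) :
    q ∈ segment ℝ (q + t • v) (q - s • v) := by
  rw [mem_segment_iff_sameRay]
  have h : SameRay ℝ (t • -v) (s • -v) := ((SameRay.refl _).nonneg_smul_left ht).nonneg_smul_right hs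
  simpa [smul_neg] using h

lemma mem_segment_of_mem_ray_of_mem_ray_add_pi {q p p' : Plane} {θ : ℝ}
    (hp : p ∈ ray q θ) (hp' : p' ∈ ray q (θ + π)) : q ∈ segment ℝ p p' := by
  obtain ⟨t, ht, rfl⟩ := hp
  obtain ⟨s, hs, rfl⟩ := hp'
  have hdir : (WithLp.equiv 2 (Fin 2 → ℝ)).symm ![Real.cos (θ + π), Real.sin (θ + π)]
      = -((WithLp.equiv 2 (Fin 2 → ℝ)).symm ![Real.cos θ, Real.sin θ] : Plane) := by
    ext i
    fin_cases i <;> simp [Real.cos_add_pi, Real.sin_add_pi]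
  rw [hdir, smul_neg, ← sub_eq_add_neg]
  exact mem_segment_add_smul_sub_smul q _ ht hs

lemma stab_pos_iff {C : Finset (Set Plane)} {q : Plane} {θ : ℝ} :
    0 < stab C q θ ↔ ∃ A ∈ C, (ray q θ ∩ A).Nonempty := by
  classical
  simp [stab, Finset.card_pos, Finset.filter_nonempty_iff]

lemma min_stab_eq_zero_of_le_norm {C : Finset (Set Plane)} {r : ℝ}
    (hC : ⋃ A ∈ C, A ⊆ Metric.ball 0 r) {q : Plane} (hq : r ≤ ‖q‖) (θ : ℝ) :
    min (stab C q θ) (stab C q (θ + π)) = 0 := by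
  by_contra h
  obtain ⟨hθ, hθπ⟩ := lt_min_iff.mp (Nat.pos_of_ne_zero h)
  obtain ⟨A, hA, p, hp, hpA⟩ := stab_pos_iff.mp hθ
  obtain ⟨B, hB, p', hp', hpB⟩ := stab_pos_iff.mp hθπ
  have hq_ball : q ∈ Metric.ball (0 : Plane) r :=
    (convex_ball 0 r).segment_subset (hC (Set.mem_biUnion hA hpA)) (hC (Set.mem_biUnion hB hpB))
      (mem_segment_of_mem_ray_of_mem_ray_add_pi hp hp')
  rw [mem_ball_zero_iff] at hq_ball
  linarith

lemma pointDepth_eq_zero_of_min_stab_eq_zero {C : Finset (Set Plane)} {q : Plane}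
    (h : ∀ θ, min (stab C q θ) (stab C q (θ + π)) = 0) : pointDepth C q = 0 := by
  simp [pointDepth, ← Nat.cast_min, h]

theorem stmt3_general (C : Finset (Set Plane))
    (hbdd : Bornology.IsBounded (⋃ A ∈ C, A)) :
    ∃ R : ℝ, 0 < R ∧ (∀ q : Plane, R < ‖q‖ → pointDepth C q = 0) ∧
      ∀ qs : ℕ → Plane, Tendsto (fun k => ‖qs k‖) atTop atTop →
        Tendsto (fun k => pointDepth C (qs k)) atTop (nhds 0) := by
  obtain ⟨R, hR, hC⟩ := hbdd.subset_ball_lt 0 0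
  have hfar : ∀ q : Plane, R < ‖q‖ → pointDepth C q = 0 := fun q hq =>
    pointDepth_eq_zero_of_min_stab_eq_zero (min_stab_eq_zero_of_le_norm hC hq.le)
  refine ⟨R, hR, hfar, fun qs hqs => tendsto_const_nhds.congr' ?_⟩
  filter_upwards [hqs.eventually_gt_atTop R] with k hk
  exact (hfar _ hk).symm

theorem stmt3 (n : ℕ) (hn : 1 ≤ n) (C : Finset (Set Plane)) (hC : C.card = n)
    (hbdd : Bornology.IsBounded (⋃ A ∈ C, A)) :
    ∃ R : ℝ, 0 < R ∧ (∀ q : Plane, R < ‖q‖ → pointDepth C q = 0) ∧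
      ∀ qs : ℕ → Plane, Tendsto (fun k => ‖qs k‖) atTop atTop →
        Tendsto (fun k => pointDepth C (qs k)) atTop (nhds 0) :=
  stmt3_general C hbdd
end
end

section
/- Concentration of the Monte Carlo depth estimator: let n ≥ 1 and let p be a probability mass function on {0, 1, ..., n}. Let X₁, ..., X_N be independent random variables on a probability space, each distributed according to p. Define the empirical frequencies p̂_k = |{i ∈ {1,...,N} : X_i = k}| / N, the estimator D̂ = Σ_{k=0}^n k·p̂_k, and the target value D = Σ_{k=0}^n k·p_k. For any ε > 0, if N ≥ 20(n+1)n²/ε², then the probability that |D̂ − D| < ε is at least 1 − 3·exp(−Nε²/(25n²)). -/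
open Real MeasureTheory ProbabilityTheory
open scoped Classical

noncomputable section

/-- Bounded measurable functions are integrable w.r.t. a finite measure. -/
lemma aux_integrable_of_bound {Ω : Type*} [MeasurableSpace Ω] (μ : Measure Ω)
    [IsFiniteMeasure μ] (f : Ω → ℝ) (hf : Measurable f) (C : ℝ)
    (h : ∀ ω, |f ω| ≤ C) : Integrable f μ :=
  (integrable_const C).mono' hf.aestronglyMeasurable (Filter.Eventually.of_forall h)

/-- Quadratic upper bound for `exp` on `[-1, 1]`. -/
lemma aux_exp_le_quad {x : ℝ} (hx : |x| ≤ 1) :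
    Real.exp x ≤ 1 + x + (3 / 4) * x ^ 2 := by
  have h := Real.exp_bound hx (n := 2) (by norm_num)
  have h2 : ∑ m ∈ Finset.range 2, x ^ m / m.factorial = 1 + x := by
    simp [Finset.sum_range_succ]
  rw [h2] at h
  have habs : |x| ^ 2 = x ^ 2 := sq_abs x
  have := abs_le.mp h
  have hle : Real.exp x - (1 + x) ≤ |x| ^ 2 * ((2 : ℕ).succ / ((2 : ℕ).factorial * 2)) :=
    this.2
  rw [habs] at hle
  norm_num at hle
  nlinarith [hle]

/-- MGF bound for a centered, bounded random variable, for small `t`. -/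
lemma aux_mgf_le {Ω : Type*} [MeasurableSpace Ω] (μ : Measure Ω)
    [IsProbabilityMeasure μ] (W : Ω → ℝ) (hW : Measurable W) (b t : ℝ)
    (hb : ∀ ω, |W ω| ≤ b) (hmean : ∫ ω, W ω ∂μ = 0) (htb : |t| * b ≤ 1) :
    mgf W μ t ≤ Real.exp ((3 / 4) * t ^ 2 * b ^ 2) := by
  -- pointwise bound |t * W ω| ≤ 1
  have hpt : ∀ ω, |t * W ω| ≤ 1 := by
    intro ω
    rw [abs_mul]
    calc |t| * |W ω| ≤ |t| * b := by
          exact mul_le_mul_of_nonneg_left (hb ω) (abs_nonneg t)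
      _ ≤ 1 := htb
  have hWint : Integrable W μ := aux_integrable_of_bound μ W hW b hb
  have hW2int : Integrable (fun ω => (W ω) ^ 2) μ := by
    refine aux_integrable_of_bound μ _ (hW.pow_const 2) (b ^ 2) ?_
    intro ω
    rw [abs_pow, ← sq_abs b]
    exact pow_le_pow_left₀ (abs_nonneg _) ((hb ω).trans (le_abs_self b)) 2
  have hexpint : Integrable (fun ω => Real.exp (t * W ω)) μ := by
    refine aux_integrable_of_bound μ _ ((hW.const_mul t).exp) (Real.exp 1) ?_
    intro ω
    rw [abs_of_pos (Real.exp_pos _)]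
    exact Real.exp_le_exp.mpr ((le_abs_self _).trans (hpt ω))
  have hpoly : Integrable (fun ω => 1 + t * W ω + (3 / 4) * t ^ 2 * (W ω) ^ 2) μ :=
    ((integrable_const 1).add (hWint.const_mul t)).add (hW2int.const_mul _)
  have h1 : mgf W μ t ≤ ∫ ω, (1 + t * W ω + (3 / 4) * t ^ 2 * (W ω) ^ 2) ∂μ := by
    refine integral_mono hexpint hpoly ?_
    intro ω
    have := aux_exp_le_quad (hpt ω)
    calc Real.exp (t * W ω) ≤ 1 + t * W ω + (3 / 4) * (t * W ω) ^ 2 := this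
      _ = 1 + t * W ω + (3 / 4) * t ^ 2 * (W ω) ^ 2 := by ring
  have h2 : ∫ ω, (1 + t * W ω + (3 / 4) * t ^ 2 * (W ω) ^ 2) ∂μ
      = 1 + (3 / 4) * t ^ 2 * ∫ ω, (W ω) ^ 2 ∂μ := by
    have i0 : Integrable (fun _ω : Ω => (1 : ℝ)) μ := integrable_const 1
    have i1 : Integrable (fun ω => 1 + t * W ω) μ := i0.add (hWint.const_mul t)
    have i2 : Integrable (fun ω => (3 / 4) * t ^ 2 * (W ω) ^ 2) μ := hW2int.const_mul _
    rw [integral_add i1 i2, integral_add i0 (hWint.const_mul t),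
      integral_const, integral_const_mul, integral_const_mul, hmean]
    simp
  have h3 : ∫ ω, (W ω) ^ 2 ∂μ ≤ b ^ 2 := by
    calc ∫ ω, (W ω) ^ 2 ∂μ ≤ ∫ _ω, b ^ 2 ∂μ := by
          refine integral_mono hW2int (integrable_const _) ?_
          intro ω
          have := abs_le.mp (hb ω)
          exact sq_le_sq' (by linarith [this.1]) this.2
      _ = b ^ 2 := by simp
  have h4 : 1 + (3 / 4) * t ^ 2 * ∫ ω, (W ω) ^ 2 ∂μ ≤ 1 + (3 / 4) * t ^ 2 * b ^ 2 := by
    have : (0 : ℝ) ≤ (3 / 4) * t ^ 2 := by positivity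
    nlinarith [h3]
  calc mgf W μ t ≤ 1 + (3 / 4) * t ^ 2 * ∫ ω, (W ω) ^ 2 ∂μ := by
        rw [mgf]; exact h1.trans_eq h2
    _ ≤ 1 + (3 / 4) * t ^ 2 * b ^ 2 := h4
    _ ≤ Real.exp ((3 / 4) * t ^ 2 * b ^ 2) := by
        have := Real.add_one_le_exp ((3 / 4) * t ^ 2 * b ^ 2)
        linarith

theorem stmt12 (n : ℕ) (hn : 1 ≤ n) (p : ℕ → ℝ)
    (hp : ∀ k, 0 ≤ p k) (hp0 : ∀ k, n < k → p k = 0)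
    (hsum : ∑ k ∈ Finset.range (n + 1), p k = 1)
    (Ω : Type*) [MeasurableSpace Ω] (μ : Measure Ω) [IsProbabilityMeasure μ]
    (N : ℕ) (X : Fin N → Ω → ℕ) (hXmeas : ∀ i, Measurable (X i))
    (hindep : iIndepFun X μ)
    (hdist : ∀ i k, μ {ω | X i ω = k} = ENNReal.ofReal (p k))
    (ε : ℝ) (hε : 0 < ε)
    (hN : (20 * (n + 1) * n ^ 2 / ε ^ 2 : ℝ) ≤ N) :
    ENNReal.ofReal (1 - 3 * Real.exp (-(N * ε ^ 2) / (25 * n ^ 2))) ≤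
      μ {ω |
        |(∑ k ∈ Finset.range (n + 1), (k : ℝ) *
            (((Finset.univ.filter fun i => X i ω = k).card : ℝ) / N)) -
          ∑ k ∈ Finset.range (n + 1), (k : ℝ) * p k| < ε} := by
  classical
  have hnpos : (0 : ℝ) < n := by exact_mod_cast hn
  have hNR : (0 : ℝ) < N := by
    refine lt_of_lt_of_le ?_ hN
    positivity
  set D : ℝ := ∑ k ∈ Finset.range (n + 1), (k : ℝ) * p k with hDdef
  set E : ℝ := -((N : ℝ) * ε ^ 2) / (25 * (n : ℝ) ^ 2) with hEdef
  set g : ℕ → ℝ := fun m => (if m ≤ n then (m : ℝ) else 0) - D with hgdef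
  set W : Fin N → Ω → ℝ := fun i => g ∘ X i with hWdef
  have hWmeas : ∀ i, Measurable (W i) := fun i => measurable_from_nat.comp (hXmeas i)
  have hD0 : 0 ≤ D := Finset.sum_nonneg fun k _ => mul_nonneg (Nat.cast_nonneg k) (hp k)
  have hDn : D ≤ n := by
    calc D ≤ ∑ k ∈ Finset.range (n + 1), (n : ℝ) * p k := by
          refine Finset.sum_le_sum fun k hk => ?_
          have : (k : ℝ) ≤ n := by
            have := Finset.mem_range.mp hk; exact_mod_cast Nat.lt_succ_iff.mp this
          exact mul_le_mul_of_nonneg_right this (hp k)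
      _ = n := by rw [← Finset.mul_sum, hsum, mul_one]
  have hgb : ∀ m, |g m| ≤ n := by
    intro m
    rw [hgdef, abs_le]
    simp only
    constructor
    · split_ifs with h
      · have : (0 : ℝ) ≤ (m : ℝ) := Nat.cast_nonneg m
        linarith
      · linarith
    · split_ifs with h
      · have : (m : ℝ) ≤ n := by exact_mod_cast h
        linarith
      · linarith
  have hWb : ∀ i ω, |W i ω| ≤ n := fun i ω => hgb (X i ω)
  -- the finite-sum identity for the truncation
  have hphi : ∀ m : ℕ, (∑ k ∈ Finset.range (n + 1), (k : ℝ) * (if m = k then (1 : ℝ) else 0))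
      = (if m ≤ n then (m : ℝ) else 0) := by
    intro m
    by_cases h : m ≤ n
    · rw [Finset.sum_eq_single m (fun k _ hk => by simp [Ne.symm hk])
        (fun hm => absurd (Finset.mem_range.mpr (Nat.lt_succ_of_le h)) hm)]
      simp [h]
    · rw [if_neg h]
      refine Finset.sum_eq_zero fun k hk => ?_
      have hne : m ≠ k := by
        have := Finset.mem_range.mp hk; omega
      simp [hne]
  -- expectation of W i is zero
  have hmean : ∀ i, ∫ ω, W i ω ∂μ = 0 := by
    intro i
    have hYeq : ∀ ω, (if X i ω ≤ n then ((X i ω : ℕ) : ℝ) else 0)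
        = ∑ k ∈ Finset.range (n + 1),
            Set.indicator {ω' | X i ω' = k} (fun _ => (k : ℝ)) ω := by
      intro ω
      rw [← hphi (X i ω)]
      refine Finset.sum_congr rfl fun k _ => ?_
      by_cases hxk : X i ω = k
      · simp [Set.indicator, hxk]
      · simp [Set.indicator, hxk]
    have hWieq : W i = fun ω => (∑ k ∈ Finset.range (n + 1),
        Set.indicator {ω' | X i ω' = k} (fun _ => (k : ℝ)) ω) - D := by
      funext ω
      rw [← hYeq ω]
      rfl
    have hms : ∀ k : ℕ, MeasurableSet {ω' | X i ω' = k} := fun k =>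
      (hXmeas i) (measurableSet_singleton k)
    have hint : ∀ k ∈ Finset.range (n + 1),
        Integrable (fun ω => Set.indicator {ω' | X i ω' = k} (fun _ => (k : ℝ)) ω) μ :=
      fun k _ => (integrable_const ((k : ℝ))).indicator (hms k)
    rw [hWieq, integral_sub (integrable_finset_sum _ hint) (integrable_const D),
      integral_const, integral_finset_sum _ hint]
    have hterm : ∀ k ∈ Finset.range (n + 1),
        ∫ ω, Set.indicator {ω' | X i ω' = k} (fun _ => (k : ℝ)) ω ∂μ = (k : ℝ) * p k := by
      intro k _
      rw [integral_indicator_const ((k : ℝ)) (hms k), measureReal_def, hdist i k,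
        ENNReal.toReal_ofReal (hp k), smul_eq_mul, mul_comm]
    rw [Finset.sum_congr rfl hterm]
    simp [hDdef]
  -- the sum of the centered variables
  set S : Ω → ℝ := fun ω => ∑ i, W i ω with hSdef
  have hSmeas : Measurable S := Finset.measurable_sum Finset.univ fun i _ => hWmeas i
  have hSb : ∀ ω, |S ω| ≤ (N : ℝ) * n := by
    intro ω
    calc |S ω| ≤ ∑ i, |W i ω| := Finset.abs_sum_le_sum_abs _ _
      _ ≤ ∑ _i : Fin N, (n : ℝ) := Finset.sum_le_sum fun i _ => hWb i ω
      _ = (N : ℝ) * n := by simp [Finset.sum_const, Finset.card_univ, nsmul_eq_mul]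
  -- key pointwise identity
  have key : ∀ ω, (∑ k ∈ Finset.range (n + 1), (k : ℝ) *
      (((Finset.univ.filter fun i => X i ω = k).card : ℝ) / N)) - D = S ω / N := by
    intro ω
    have hcard : ∀ k : ℕ, ((Finset.univ.filter fun i => X i ω = k).card : ℝ)
        = ∑ i, (if X i ω = k then (1 : ℝ) else 0) := by
      intro k
      rw [Finset.card_filter]
      push_cast
      rfl
    have h1 : ∀ k ∈ Finset.range (n + 1), (k : ℝ) *
        (((Finset.univ.filter fun i => X i ω = k).card : ℝ) / N)
        = (∑ i, (k : ℝ) * (if X i ω = k then (1 : ℝ) else 0)) / N := by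
      intro k _
      rw [hcard k, ← mul_div_assoc, Finset.mul_sum]
    rw [Finset.sum_congr rfl h1, ← Finset.sum_div, Finset.sum_comm]
    have h2 : ∀ i : Fin N, ∑ k ∈ Finset.range (n + 1),
        (k : ℝ) * (if X i ω = k then (1 : ℝ) else 0)
        = (if X i ω ≤ n then ((X i ω : ℕ) : ℝ) else 0) := fun i => hphi (X i ω)
    rw [Finset.sum_congr rfl fun i _ => h2 i]
    have h3 : S ω = (∑ i, (if X i ω ≤ n then ((X i ω : ℕ) : ℝ) else 0)) - N * D := by
      have : S ω = ∑ i, ((if X i ω ≤ n then ((X i ω : ℕ) : ℝ) else 0) - D) := rfl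
      rw [this, Finset.sum_sub_distrib]
      simp [Finset.sum_const, Finset.card_univ, nsmul_eq_mul]
    rw [h3]
    field_simp
  -- rewrite the event
  have hseteq : {ω | |(∑ k ∈ Finset.range (n + 1), (k : ℝ) *
      (((Finset.univ.filter fun i => X i ω = k).card : ℝ) / N)) - D| < ε}
      = {ω | |S ω / N| < ε} := by
    ext ω
    simp only [Set.mem_setOf_eq, key ω]
  rw [hseteq]
  have hA : MeasurableSet {ω | |S ω / N| < ε} :=
    measurableSet_lt ((hSmeas.div_const _).abs) measurable_const
  -- independence of the W's
  have hindepW : iIndepFun W μ :=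
    hindep.comp (fun _ => g) (fun _ => measurable_from_nat)
  have hexpint : ∀ s : ℝ, Integrable (fun ω => Real.exp (s * S ω)) μ := by
    intro s
    refine aux_integrable_of_bound μ _ ((hSmeas.const_mul s).exp)
      (Real.exp (|s| * ((N : ℝ) * n))) ?_
    intro ω
    rw [abs_of_pos (Real.exp_pos _)]
    refine Real.exp_le_exp.mpr ?_
    calc s * S ω ≤ |s * S ω| := le_abs_self _
      _ = |s| * |S ω| := abs_mul _ _
      _ ≤ |s| * ((N : ℝ) * n) := mul_le_mul_of_nonneg_left (hSb ω) (abs_nonneg s)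
  -- mgf bound for S
  have hmgfS : ∀ s : ℝ, |s| * n ≤ 1 → mgf S μ s ≤ Real.exp (N * ((3 / 4) * s ^ 2 * n ^ 2)) := by
    intro s hs
    have hSsum : S = ∑ i, W i := by
      funext ω
      rw [Finset.sum_apply]
    rw [hSsum, hindepW.mgf_sum hWmeas Finset.univ]
    calc ∏ i, mgf (W i) μ s ≤ ∏ _i : Fin N, Real.exp ((3 / 4) * s ^ 2 * (n : ℝ) ^ 2) :=
          Finset.prod_le_prod (fun i _ => mgf_nonneg)
            (fun i _ => aux_mgf_le μ (W i) (hWmeas i) n s (hWb i) (hmean i) hs)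
      _ = Real.exp ((3 / 4) * s ^ 2 * (n : ℝ) ^ 2) ^ N := by
          simp [Finset.prod_const, Finset.card_univ]
      _ = Real.exp (N * ((3 / 4) * s ^ 2 * (n : ℝ) ^ 2)) := (Real.exp_nat_mul _ N).symm
  -- the two tail events
  set B1 : Set Ω := {ω | (N : ℝ) * ε ≤ S ω} with hB1def
  set B2 : Set Ω := {ω | S ω ≤ -((N : ℝ) * ε)} with hB2def
  have htails : (μ B1).toReal ≤ Real.exp E ∧ (μ B2).toReal ≤ Real.exp E := by
    by_cases hεn : ε ≤ 5 * n
    · -- Chernoff bound case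
      set t : ℝ := ε / (5 * (n : ℝ) ^ 2) with htdef
      have ht0 : 0 < t := by positivity
      have htn : ∀ s : ℝ, |s| = t → |s| * n ≤ 1 := by
        intro s hs
        rw [hs, htdef]
        rw [div_mul_eq_mul_div, div_le_one (by positivity)]
        nlinarith
      have hexpo : (N : ℝ) * (-t * ε + (3 / 4) * t ^ 2 * (n : ℝ) ^ 2) ≤ E := by
        have hcore : -t * ε + (3 / 4) * t ^ 2 * (n : ℝ) ^ 2 ≤ -(ε ^ 2) / (25 * (n : ℝ) ^ 2) := by
          have hn' : (n : ℝ) ≠ 0 := ne_of_gt hnpos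
          have h1 : -t * ε + (3 / 4) * t ^ 2 * (n : ℝ) ^ 2
              = -(17 / 100) * (ε ^ 2 / (n : ℝ) ^ 2) := by
            rw [htdef]; field_simp; ring
          have h2 : -(ε ^ 2) / (25 * (n : ℝ) ^ 2) = -(4 / 100) * (ε ^ 2 / (n : ℝ) ^ 2) := by
            field_simp; ring
          rw [h1, h2]
          have hx : 0 ≤ ε ^ 2 / (n : ℝ) ^ 2 := by positivity
          linarith
        have := mul_le_mul_of_nonneg_left hcore (le_of_lt hNR)
        calc (N : ℝ) * (-t * ε + (3 / 4) * t ^ 2 * (n : ℝ) ^ 2)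
            ≤ (N : ℝ) * (-(ε ^ 2) / (25 * (n : ℝ) ^ 2)) := this
          _ = E := by rw [hEdef]; ring
      constructor
      · have hch := measure_ge_le_exp_mul_mgf (μ := μ) (X := S) ((N : ℝ) * ε)
          (le_of_lt ht0) (hexpint t)
        refine hch.trans ?_
        calc Real.exp (-t * ((N : ℝ) * ε)) * mgf S μ t
            ≤ Real.exp (-t * ((N : ℝ) * ε)) *
              Real.exp (N * ((3 / 4) * t ^ 2 * (n : ℝ) ^ 2)) := by
              exact mul_le_mul_of_nonneg_left (hmgfS t (htn t (abs_of_pos ht0)))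
                (le_of_lt (Real.exp_pos _))
          _ = Real.exp ((N : ℝ) * (-t * ε + (3 / 4) * t ^ 2 * (n : ℝ) ^ 2)) := by
              rw [← Real.exp_add]; ring_nf
          _ ≤ Real.exp E := Real.exp_le_exp.mpr hexpo
      · have hch := measure_le_le_exp_mul_mgf (μ := μ) (X := S) (-((N : ℝ) * ε))
          (neg_nonpos_of_nonneg (le_of_lt ht0)) (hexpint (-t))
        refine hch.trans ?_
        have habs : |(-t)| = t := by rw [abs_neg, abs_of_pos ht0]
        calc Real.exp (-(-t) * -((N : ℝ) * ε)) * mgf S μ (-t)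
            ≤ Real.exp (-(-t) * -((N : ℝ) * ε)) *
              Real.exp (N * ((3 / 4) * (-t) ^ 2 * (n : ℝ) ^ 2)) := by
              exact mul_le_mul_of_nonneg_left (hmgfS (-t) (htn (-t) habs))
                (le_of_lt (Real.exp_pos _))
          _ = Real.exp ((N : ℝ) * (-t * ε + (3 / 4) * t ^ 2 * (n : ℝ) ^ 2)) := by
              rw [← Real.exp_add]; ring_nf
          _ ≤ Real.exp E := Real.exp_le_exp.mpr hexpo
    · -- trivial case: the tail events are empty
      push_neg at hεn
      have hNn : (N : ℝ) * n < (N : ℝ) * ε := by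
        have : (n : ℝ) < ε := by nlinarith
        exact mul_lt_mul_of_pos_left this hNR
      have hb1 : B1 = ∅ := by
        rw [hB1def, Set.eq_empty_iff_forall_notMem]
        intro ω hω
        have h1 : S ω ≤ (N : ℝ) * n := (abs_le.mp (hSb ω)).2
        have : (N : ℝ) * ε ≤ S ω := hω
        linarith
      have hb2 : B2 = ∅ := by
        rw [hB2def, Set.eq_empty_iff_forall_notMem]
        intro ω hω
        have h1 : -((N : ℝ) * n) ≤ S ω := (abs_le.mp (hSb ω)).1
        have : S ω ≤ -((N : ℝ) * ε) := hω
        linarith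
      rw [hb1, hb2]
      simp [le_of_lt (Real.exp_pos E)]
  -- union bound
  have hsub : {ω | |S ω / N| < ε}ᶜ ⊆ B1 ∪ B2 := by
    intro ω hω
    simp only [Set.mem_compl_iff, Set.mem_setOf_eq, not_lt] at hω
    have h1 : ε ≤ |S ω| / N := by
      rwa [abs_div, abs_of_pos hNR] at hω
    have h2 : ε * N ≤ |S ω| := (le_div_iff₀ hNR).mp h1
    rcases le_abs.mp h2 with h | h
    · left
      show (N : ℝ) * ε ≤ S ω
      linarith
    · right
      show S ω ≤ -((N : ℝ) * ε)
      linarith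
  have hcompl : (μ ({ω | |S ω / N| < ε}ᶜ)).toReal ≤ 2 * Real.exp E := by
    calc (μ ({ω | |S ω / N| < ε}ᶜ)).toReal ≤ (μ (B1 ∪ B2)).toReal :=
          ENNReal.toReal_mono (measure_ne_top _ _) (measure_mono hsub)
      _ ≤ (μ B1).toReal + (μ B2).toReal := by
          have hle := measure_union_le (μ := μ) B1 B2
          have hne : μ B1 + μ B2 ≠ ⊤ :=
            ENNReal.add_ne_top.mpr ⟨measure_ne_top _ _, measure_ne_top _ _⟩
          have := ENNReal.toReal_mono hne hle
          rwa [ENNReal.toReal_add (measure_ne_top _ _) (measure_ne_top _ _)] at this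
      _ ≤ 2 * Real.exp E := by linarith [htails.1, htails.2]
  have hsplit : (μ {ω | |S ω / N| < ε}).toReal + (μ ({ω | |S ω / N| < ε}ᶜ)).toReal = 1 := by
    have h := measure_add_measure_compl (μ := μ) hA
    have h2 := congrArg ENNReal.toReal h
    rwa [ENNReal.toReal_add (measure_ne_top _ _) (measure_ne_top _ _), measure_univ,
      ENNReal.toReal_one] at h2
  calc ENNReal.ofReal (1 - 3 * Real.exp E)
      ≤ ENNReal.ofReal ((μ {ω | |S ω / N| < ε}).toReal) := by
        refine ENNReal.ofReal_le_ofReal ?_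
        have := Real.exp_pos E
        linarith
    _ = μ {ω | |S ω / N| < ε} := ENNReal.ofReal_toReal (measure_ne_top μ _)
end
end
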